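/- arXiv:2502.16628 — 2 statements merged into one kernel-verified Lean document; each statement's English description precedes it below -/
import Mathlib

section
/- If the cycle graph C_n (n ≥ 3) admits a geodesic Leech labeling, then n = 3, n = 4, or n = 10. -/
/-!
A path in a cycle never turns back, so the geodesic paths of `C_n` are exactly the `n * m` arcs
of lengths `1, …, m`, where `m = n / 2`. An edge lies on exactly `ℓ` arcs of length `ℓ`, so the
weights of all geodesic paths add up to `m (m + 1) / 2 * S`, where `S` is the sum of all labels;
for a Leech labeling they add up to `T (T + 1) / 2` with `T = n m`. Hence `m + 1 ∣ n (n m + 1)`,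
and reducing modulo `m + 1` gives `m + 1 ∣ 6` for even `n` and `m + 1 ∣ 2` for odd `n`.
-/

open SimpleGraph Finset

/-- A walk in `G` is a *geodesic walk* if it is a nontrivial path whose length equals
the distance in `G` between its endpoints. -/
def SimpleGraph.IsGeodesicWalk {V : Type*} (G : SimpleGraph V) {u v : V}
    (p : G.Walk u v) : Prop :=
  p.IsPath ∧ p.length = G.dist u v ∧ 0 < p.length

/-- The geodesic paths of `G`, where a path and its reverse are identified by
recording the (finite) set of edges of the path.  (A nontrivial path is determined,
up to reversal, by its edge set.) -/
def SimpleGraph.geodesicPathSets {V : Type*} [DecidableEq V] (G : SimpleGraph V) :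
    Set (Finset (Sym2 V)) :=
  {S | ∃ (u v : V) (p : G.Walk u v), G.IsGeodesicWalk p ∧ p.edges.toFinset = S}

/-- The geodesic path number `t_gp(G)`: the number of geodesic paths of `G`. -/
noncomputable def SimpleGraph.tgp {V : Type*} [DecidableEq V] (G : SimpleGraph V) : ℕ :=
  G.geodesicPathSets.ncard

/-- `f` is a geodesic Leech labeling of `G`: an edge labeling by positive integers such
that the weights of the geodesic paths of `G` are exactly `1, 2, …, t_gp(G)`,
each occurring exactly once. -/
def SimpleGraph.IsGeodesicLeechLabeling {V : Type*} [DecidableEq V] (G : SimpleGraph V)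
    (f : Sym2 V → ℕ) : Prop :=
  (∀ e ∈ G.edgeSet, 1 ≤ f e) ∧
    Set.BijOn (fun S => ∑ e ∈ S, f e) G.geodesicPathSets (Set.Icc 1 G.tgp)

theorem SimpleGraph.IsGeodesicLeechLabeling.sum_weight_eq {V : Type*} [DecidableEq V]
    {G : SimpleGraph V} {f : Sym2 V → ℕ} (hf : G.IsGeodesicLeechLabeling f)
    {F : Finset (Finset (Sym2 V))} (hF : G.geodesicPathSets = F) :
    ∑ S ∈ F, ∑ e ∈ S, f e = ∑ j ∈ Icc 1 G.tgp, j := by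
  have hbij := hf.2
  rw [hF, ← coe_Icc] at hbij
  exact sum_nbij _ hbij.mapsTo hbij.injOn hbij.surjOn fun _ _ => rfl

section Ascending

variable {V : Type*} [AddCommMonoidWithOne V] {G : SimpleGraph V}

def SimpleGraph.Walk.IsAscending {u v : V} (p : G.Walk u v) : Prop :=
  ∀ d ∈ p.darts, d.snd = d.fst + 1

namespace SimpleGraph.Walk

@[simp]
theorem isAscending_cons {u v w : V} (h : G.Adj u v) (p : G.Walk v w) :
    (cons h p).IsAscending ↔ v = u + 1 ∧ p.IsAscending := by
  simp [IsAscending]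

namespace IsAscending

variable {u v : V} {p : G.Walk u v}

theorem getVert_eq (hp : p.IsAscending) {i : ℕ} (hi : i ≤ p.length) : p.getVert i = u + i := by
  induction p generalizing i with
  | nil => simp_all
  | cons h q ih =>
    obtain ⟨rfl, hq⟩ := (isAscending_cons _ _).1 hp
    rcases i with _ | i
    · simp
    · rw [getVert_cons_succ, ih hq (by simpa using hi)]
      push_cast
      abel

theorem end_eq (hp : p.IsAscending) : v = u + p.length := by
  rw [← hp.getVert_eq le_rfl, getVert_length]

theorem edges_eq (hp : p.IsAscending) :
    p.edges = (List.range p.length).map fun i : ℕ => s(u + i, u + i + 1) := by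
  induction p with
  | nil => simp
  | cons h q ih =>
    obtain ⟨rfl, hq⟩ := (isAscending_cons _ _).1 hp
    rw [edges_cons, ih hq, length_cons, List.range_succ_eq_map, List.map_cons, List.map_map]
    congr 1
    · simp
    · refine List.map_congr_left fun i _ => ?_
      simp only [Function.comp_apply]
      push_cast
      rw [add_right_comm _ (1 : V), add_assoc]

end IsAscending

end SimpleGraph.Walk

end Ascending

section CycleGraph

open scoped Fin.NatCast Fin.CommRing

variable {k : ℕ}

theorem Fin.eq_of_natCast_eq {n i j : ℕ} [NeZero n] (hi : i < n) (hj : j < n)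
    (h : (i : Fin n) = j) : i = j := by
  simpa [Fin.val_cast_of_lt hi, Fin.val_cast_of_lt hj] using congrArg Fin.val h

namespace SimpleGraph

def cycleArc (a : Fin (k + 3)) (ℓ : ℕ) : Finset (Sym2 (Fin (k + 3))) :=
  (range ℓ).image fun i : ℕ => s(a + i, a + i + 1)

theorem cycleGraph_adj_add_one (a : Fin (k + 3)) : (cycleGraph (k + 3)).Adj a (a + 1) :=
  cycleGraph_adj.2 (.inr (add_sub_cancel_left a 1))

theorem cycleGraph_sub_eq_of_adj {u v : Fin (k + 3)} (h : (cycleGraph (k + 3)).Adj u v) :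
    v - u = 1 ∨ v - u = -1 := by
  rcases cycleGraph_adj.1 h with h | h
  · exact .inr (by rw [← neg_sub, h])
  · exact .inl h

theorem exists_isAscending_cycleGraph_walk (a : Fin (k + 3)) (ℓ : ℕ) :
    ∃ p : (cycleGraph (k + 3)).Walk a (a + ℓ), p.IsAscending ∧ p.length = ℓ := by
  induction ℓ generalizing a with
  | zero =>
    refine ⟨Walk.nil.copy rfl (by simp), ?_, by simp only [Walk.length_copy, Walk.length_nil]⟩
    simp [Walk.IsAscending]
  | succ ℓ ih =>
    obtain ⟨p, hp, hlen⟩ := ih (a + 1)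
    refine ⟨(Walk.cons (cycleGraph_adj_add_one a) p).copy rfl (by push_cast; ring), ?_, ?_⟩
    · simpa [Walk.IsAscending] using hp
    · simp [hlen]

theorem cycleGraph_dist_add_le (a : Fin (k + 3)) (ℓ : ℕ) :
    (cycleGraph (k + 3)).dist a (a + ℓ) ≤ ℓ := by
  obtain ⟨p, -, hlen⟩ := exists_isAscending_cycleGraph_walk a ℓ
  exact (dist_le p).trans hlen.le

namespace Walk

variable {u v : Fin (k + 3)} {p : (cycleGraph (k + 3)).Walk u v}

theorem IsAscending.isPath (hp : p.IsAscending) (hlen : p.length < k + 3) : p.IsPath := by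
  refine (IsPath.getVert_injOn_iff p).1 fun i hi j hj hij => ?_
  rw [hp.getVert_eq hi, hp.getVert_eq hj] at hij
  exact Fin.eq_of_natCast_eq (by simp at hi; omega) (by simp at hj; omega) (add_left_cancel hij)

theorem IsPath.exists_cycleGraph_step (hp : p.IsPath) :
    ∃ ε : Fin (k + 3), (ε = 1 ∨ ε = -1) ∧ ∀ d ∈ p.darts, d.snd = d.fst + ε := by
  induction p with
  | nil => exact ⟨1, .inl rfl, by simp⟩
  | @cons x w y h q ih =>
    rw [cons_isPath_iff] at hp
    obtain ⟨ε, hε, hq⟩ := ih hp.1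
    refine ⟨w - x, cycleGraph_sub_eq_of_adj h, ?_⟩
    suffices q.darts = [] ∨ ε = w - x by
      simp only [darts_cons, List.mem_cons, forall_eq_or_imp]
      refine ⟨(add_sub_cancel x w).symm, fun d hd => ?_⟩
      rcases this with hnil | rfl
      · simp [hnil] at hd
      · exact hq d hd
    cases q with
    | nil => exact .inl rfl
    | @cons _ z _ h' q' =>
      refine .inr (by_contra fun hne => hp.2 ?_)
      -- a change of direction would make the path step back to `x`
      have hz : z = w + ε := hq _ List.mem_cons_self
      have hε' : ε = -(w - x) := by
        rcases hε with rfl | rfl <;> rcases cycleGraph_sub_eq_of_adj h with h1 | h1 <;>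
          simp_all
      have : z = x := by rw [hz, hε']; ring
      rw [support_cons, ← this]
      exact List.mem_cons_of_mem _ q'.start_mem_support

theorem IsAscending.edges_toFinset_eq_cycleArc (hp : p.IsAscending) :
    p.edges.toFinset = cycleArc u p.length := by
  ext e
  simp [hp.edges_eq, cycleArc]

theorem IsPath.edges_toFinset_eq_cycleArc (hp : p.IsPath) :
    (p.edges.toFinset = cycleArc u p.length ∧ v = u + p.length) ∨
      (p.edges.toFinset = cycleArc v p.length ∧ u = v + p.length) := by
  obtain ⟨ε, rfl | rfl, hsteps⟩ := hp.exists_cycleGraph_step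
  · exact .inl ⟨IsAscending.edges_toFinset_eq_cycleArc hsteps, IsAscending.end_eq hsteps⟩
  · have hrev : p.reverse.IsAscending := by
      intro d hd
      rw [darts_reverse, List.mem_reverse, List.mem_map] at hd
      obtain ⟨d, hd, rfl⟩ := hd
      simp [hsteps d hd]
    have hedges := hrev.edges_toFinset_eq_cycleArc
    rw [edges_reverse, List.toFinset_reverse, length_reverse] at hedges
    exact .inr ⟨hedges, by simpa using hrev.end_eq⟩

end Walk

theorem cycleGraph_exists_path_length_eq_dist (u v : Fin (k + 3)) :
    ∃ p : (cycleGraph (k + 3)).Walk u v,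
      p.IsPath ∧ p.length = (cycleGraph (k + 3)).dist u v ∧ p.length < k + 3 := by
  have hconn : (cycleGraph (k + 3)).Connected := cycleGraph_connected
  obtain ⟨p, hp, hlen⟩ := hconn.exists_path_of_dist u v
  exact ⟨p, hp, hlen, by simpa [Nat.lt_succ_iff] using hp.length_lt⟩

theorem cycleGraph_dist_add_le_of_eq_add {u v : Fin (k + 3)} {ℓ : ℕ} (h : v = u + ℓ)
    (hℓ : ℓ ≤ k + 3) : (cycleGraph (k + 3)).dist u v + ℓ ≤ k + 3 := by
  have hu : u = v + (k + 3 - ℓ : ℕ) := by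
    rw [h, Nat.cast_sub hℓ, Fin.natCast_self]
    ring
  have := cycleGraph_dist_add_le v (k + 3 - ℓ)
  rw [← hu, dist_comm] at this
  omega

theorem cycleGraph_two_mul_dist_le (u v : Fin (k + 3)) :
    2 * (cycleGraph (k + 3)).dist u v ≤ k + 3 := by
  obtain ⟨p, hp, hlen, hlt⟩ := cycleGraph_exists_path_length_eq_dist u v
  have : (cycleGraph (k + 3)).dist u v + p.length ≤ k + 3 := by
    rcases hp.edges_toFinset_eq_cycleArc with ⟨-, hv⟩ | ⟨-, hu⟩
    · exact cycleGraph_dist_add_le_of_eq_add hv hlt.le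
    · exact dist_comm ▸ cycleGraph_dist_add_le_of_eq_add hu hlt.le
  omega

theorem cycleGraph_dist_add {a : Fin (k + 3)} {ℓ : ℕ} (h : 2 * ℓ ≤ k + 3) :
    (cycleGraph (k + 3)).dist a (a + ℓ) = ℓ := by
  refine le_antisymm (cycleGraph_dist_add_le a ℓ) ?_
  obtain ⟨p, hp, hlen, hlt⟩ := cycleGraph_exists_path_length_eq_dist a (a + ℓ)
  rw [← hlen]
  rcases hp.edges_toFinset_eq_cycleArc with ⟨-, hv⟩ | ⟨-, hu⟩
  · exact (Fin.eq_of_natCast_eq (by omega) hlt (add_left_cancel hv)).le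
  · have hdvd : k + 3 ∣ ℓ + p.length := by
      rw [← Fin.natCast_eq_zero (n := k + 3), Nat.cast_add]
      exact add_left_cancel (a := a) (by rw [← add_assoc, ← hu, add_zero])
    by_contra! hshort
    have := Nat.eq_zero_of_dvd_of_lt hdvd (by omega)
    omega

theorem cycleGraph_edge_inj {x y : Fin (k + 3)} (h : s(x, x + 1) = s(y, y + 1)) : x = y := by
  rcases Sym2.eq_iff.1 h with ⟨hxy, -⟩ | ⟨hx, hy⟩
  · exact hxy
  · have : ((2 : ℕ) : Fin (k + 3)) = 0 := by
      push_cast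
      linear_combination hy - hx
    have := Nat.le_of_dvd two_pos (Fin.natCast_eq_zero.1 this)
    omega

theorem cycleArc_edge_injOn (a : Fin (k + 3)) {ℓ : ℕ} (hℓ : ℓ ≤ k + 3) :
    Set.InjOn (fun i : ℕ => s(a + i, a + i + 1)) (range ℓ) := fun i hi j hj hij =>
  Fin.eq_of_natCast_eq (by simp at hi; omega) (by simp at hj; omega)
    (add_left_cancel (cycleGraph_edge_inj hij))

theorem card_cycleArc (a : Fin (k + 3)) {ℓ : ℕ} (hℓ : ℓ ≤ k + 3) : (cycleArc a ℓ).card = ℓ := by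
  rw [cycleArc, card_image_of_injOn (cycleArc_edge_injOn a hℓ), card_range]

theorem sum_cycleArc (f : Sym2 (Fin (k + 3)) → ℕ) (a : Fin (k + 3)) {ℓ : ℕ} (hℓ : ℓ ≤ k + 3) :
    ∑ e ∈ cycleArc a ℓ, f e = ∑ i ∈ range ℓ, f s(a + i, a + i + 1) :=
  sum_image (cycleArc_edge_injOn a hℓ)

theorem start_mem_cycleArc (a : Fin (k + 3)) {ℓ : ℕ} (hℓ : 0 < ℓ) : s(a, a + 1) ∈ cycleArc a ℓ :=
  mem_image.2 ⟨0, mem_range.2 hℓ, by simp⟩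

def cycleArcs (k : ℕ) : Finset (Finset (Sym2 (Fin (k + 3)))) :=
  (univ ×ˢ Icc 1 ((k + 3) / 2)).image fun q => cycleArc q.1 q.2

theorem cycleArc_injOn :
    Set.InjOn (fun q : Fin (k + 3) × ℕ => cycleArc q.1 q.2)
      ↑(univ ×ˢ Icc 1 ((k + 3) / 2) : Finset (Fin (k + 3) × ℕ)) := by
  rintro ⟨a, ℓ⟩ ha ⟨b, j⟩ hb (hab : cycleArc a ℓ = cycleArc b j)
  simp only [coe_product, coe_univ, coe_Icc, Set.mem_prod, Set.mem_univ, Set.mem_Icc,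
    true_and] at ha hb
  obtain rfl : ℓ = j := by
    rw [← card_cycleArc a (ℓ := ℓ) (by omega), hab, card_cycleArc b (by omega)]
  obtain ⟨i, hi, hbi⟩ := mem_image.1 (hab ▸ start_mem_cycleArc b (by omega))
  obtain ⟨i', hi', hai⟩ := mem_image.1 (hab.symm ▸ start_mem_cycleArc a (by omega))
  simp only [mem_range] at hi hi'
  have hb' := cycleGraph_edge_inj hbi
  have ha' := cycleGraph_edge_inj hai
  have hdvd : k + 3 ∣ i + i' := by
    rw [← Fin.natCast_eq_zero (n := k + 3), Nat.cast_add]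
    exact add_left_cancel (a := a) (by linear_combination ha' + hb')
  obtain rfl : i = 0 := by have := Nat.eq_zero_of_dvd_of_lt hdvd (by omega); omega
  simpa using hb'

theorem cycleGraph_geodesicPathSets : (cycleGraph (k + 3)).geodesicPathSets = cycleArcs k := by
  ext S
  constructor
  · rintro ⟨u, v, p, ⟨hp, hlen, hpos⟩, rfl⟩
    have hdist : 2 * p.length ≤ k + 3 := hlen ▸ cycleGraph_two_mul_dist_le u v
    rcases hp.edges_toFinset_eq_cycleArc with ⟨he, -⟩ | ⟨he, -⟩
    · exact mem_image.2 ⟨(u, p.length), by simp; omega, he.symm⟩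
    · exact mem_image.2 ⟨(v, p.length), by simp; omega, he.symm⟩
  · intro hS
    obtain ⟨⟨a, ℓ⟩, hmem, rfl⟩ := mem_image.1 hS
    simp only [mem_product, mem_univ, mem_Icc, true_and] at hmem
    obtain ⟨p, hp, hlen⟩ := exists_isAscending_cycleGraph_walk a ℓ
    refine ⟨a, a + ℓ, p, ⟨hp.isPath (by omega), ?_, by omega⟩, ?_⟩
    · rw [hlen, cycleGraph_dist_add (by omega)]
    · rw [hp.edges_toFinset_eq_cycleArc, hlen]

theorem cycleGraph_tgp : (cycleGraph (k + 3)).tgp = (k + 3) * ((k + 3) / 2) := by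
  rw [tgp, cycleGraph_geodesicPathSets, Set.ncard_coe_finset, cycleArcs,
    card_image_of_injOn cycleArc_injOn, card_product, card_univ, Fintype.card_fin, Nat.card_Icc,
    Nat.add_sub_cancel]

theorem sum_cycleArcs (f : Sym2 (Fin (k + 3)) → ℕ) :
    ∑ S ∈ cycleArcs k, ∑ e ∈ S, f e = (∑ ℓ ∈ Icc 1 ((k + 3) / 2), ℓ) * ∑ a, f s(a, a + 1) := by
  rw [cycleArcs, sum_image cycleArc_injOn, sum_product_right, sum_mul]
  refine sum_congr rfl fun ℓ hℓ => ?_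
  simp only [mem_Icc] at hℓ
  calc ∑ a, ∑ e ∈ cycleArc a ℓ, f e = ∑ a, ∑ i ∈ range ℓ, f s(a + i, a + i + 1) :=
        sum_congr rfl fun a _ => sum_cycleArc f a (by omega)
    _ = ∑ i ∈ range ℓ, ∑ a, f s(a + i, a + i + 1) := sum_comm
    _ = ∑ i ∈ range ℓ, ∑ a, f s(a, a + 1) :=
        sum_congr rfl fun i _ => Fintype.sum_equiv (Equiv.addRight (i : Fin (k + 3))) _ _
          fun _ => rfl
    _ = ℓ * ∑ a, f s(a, a + 1) := by rw [sum_const, card_range, smul_eq_mul]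

end SimpleGraph

end CycleGraph

theorem Nat.two_mul_sum_Icc_id (t : ℕ) : 2 * ∑ j ∈ Icc 1 t, j = t * (t + 1) := by
  induction t with
  | zero => simp
  | succ t ih =>
    rw [sum_Icc_succ_top (by omega), Nat.mul_add, ih]
    ring

theorem eq_three_or_four_or_ten_of_sum_Icc_mul {n s : ℕ} (hn : 3 ≤ n)
    (h : (∑ ℓ ∈ Icc 1 (n / 2), ℓ) * s = ∑ j ∈ Icc 1 (n * (n / 2)), j) :
    n = 3 ∨ n = 4 ∨ n = 10 := by
  obtain ⟨m, hm⟩ : ∃ m, n / 2 = m := ⟨_, rfl⟩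
  rw [hm] at h
  have hm0 : 0 < m := by omega
  have key : ((m + 1) * s : ℤ) = n * (n * m + 1) := by
    have : m * ((m + 1) * s) = m * (n * (n * m + 1)) := by
      calc m * ((m + 1) * s) = (2 * ∑ ℓ ∈ Icc 1 m, ℓ) * s := by rw [Nat.two_mul_sum_Icc_id]; ring
        _ = 2 * ∑ j ∈ Icc 1 (n * m), j := by rw [mul_assoc, h]
        _ = m * (n * (n * m + 1)) := by rw [Nat.two_mul_sum_Icc_id]; ring
    exact_mod_cast Nat.eq_of_mul_eq_mul_left hm0 this
  rcases Nat.even_or_odd' n with ⟨m', rfl | rfl⟩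
  · obtain rfl : m = m' := by omega
    have : ((m + 1 : ℕ) : ℤ) ∣ 6 :=
      ⟨4 * m * m - 4 * m + 6 - s, by push_cast at key ⊢; linear_combination key⟩
    have hdvd : m + 1 ∣ 6 := by exact_mod_cast this
    have : m ≤ 5 := by have := Nat.le_of_dvd (by norm_num) hdvd; omega
    interval_cases m <;> simp_all
  · obtain rfl : m = m' := by omega
    have : ((m + 1 : ℕ) : ℤ) ∣ 2 :=
      ⟨4 * m * m + 3 - s, by push_cast at key ⊢; linear_combination key⟩
    have := Nat.le_of_dvd (by norm_num) (by exact_mod_cast this : m + 1 ∣ 2)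
    omega

/-- If the cycle on `n ≥ 3` vertices admits a geodesic Leech labeling, then
`n = 3`, `n = 4`, or `n = 10`. -/
theorem statement_6 (n : ℕ) (hn : 3 ≤ n)
    (h : ∃ f : Sym2 (Fin n) → ℕ, (SimpleGraph.cycleGraph n).IsGeodesicLeechLabeling f) :
    n = 3 ∨ n = 4 ∨ n = 10 := by
  obtain ⟨k, rfl⟩ : ∃ k, n = k + 3 := ⟨n - 3, by omega⟩
  obtain ⟨f, hf⟩ := h
  have hsum := hf.sum_weight_eq cycleGraph_geodesicPathSets
  rw [sum_cycleArcs, cycleGraph_tgp] at hsum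
  exact eq_three_or_four_or_ten_of_sum_Icc_mul hn hsum
end

section
/- The triangular prism graph (the Cartesian product K_3 □ K_2, which is the unique non-edge-transitive cubic graph on 6 vertices) admits a geodesic Leech labeling; in particular, it is a geodesic Leech graph. -/
open SimpleGraph Finset

/-! In a graph of diameter at most two every geodesic path has one or two edges, and a
two-edge path is geodesic exactly when its ends are distinct and non-adjacent. The prism
`K₃ □ K₂` has diameter two, nine edges and twelve such two-edge paths, so `t_gp = 21`, and
an explicit labeling of the nine edges gives the weights `1, …, 21`. -/

namespace SimpleGraph

variable {V : Type*}

instance boxProdDecidableRelAdj {α β : Type*} (G : SimpleGraph α) (H : SimpleGraph β)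
    [DecidableEq α] [DecidableEq β] [DecidableRel G.Adj] [DecidableRel H.Adj] :
    DecidableRel (G □ H).Adj := fun _ _ =>
  decidable_of_iff' _ boxProd_adj

lemma ediam_boxProd_top_le_two (α β : Type*) :
    ((⊤ : SimpleGraph α) □ (⊤ : SimpleGraph β)).ediam ≤ 2 := by
  classical
  refine ediam_le_of_edist_le fun x y => ?_
  rw [edist_boxProd, edist_top, edist_top]
  split_ifs <;> norm_num

section geodesic

variable {G : SimpleGraph V}

lemma IsGeodesicWalk.length_le_of_ediam_le {u v : V} {p : G.Walk u v} {n : ℕ}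
    (hp : G.IsGeodesicWalk p) (h : G.ediam ≤ n) : p.length ≤ n := by
  have hdist : (G.dist u v : ℕ∞) ≤ n :=
    p.reachable.coe_dist_eq_edist ▸ edist_le_ediam.trans h
  exact hp.2.1 ▸ mod_cast hdist

lemma dist_eq_two {u w v : V} (huw : G.Adj u w) (hwv : G.Adj w v) (hne : u ≠ v)
    (hnadj : ¬G.Adj u v) : G.dist u v = 2 := by
  have : G.edist u v = 2 :=
    edist_eq_two_iff.mpr ⟨hne, hnadj, w, huw, hwv.symm⟩
  simp [dist, this]

variable [DecidableEq V]

lemma singleton_mem_geodesicPathSets {u v : V} (h : G.Adj u v) :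
    {s(u, v)} ∈ G.geodesicPathSets :=
  ⟨u, v, .cons h .nil, ⟨by simp [h.ne], by simp [dist_eq_one_iff_adj.mpr h], by simp⟩,
    by simp⟩

lemma pair_mem_geodesicPathSets {u w v : V} (huw : G.Adj u w) (hwv : G.Adj w v)
    (hne : u ≠ v) (hnadj : ¬G.Adj u v) :
    {s(u, w), s(w, v)} ∈ G.geodesicPathSets :=
  ⟨u, v, .cons huw (.cons hwv .nil),
    ⟨by simp [huw.ne, hwv.ne, hne], by simp [dist_eq_two huw hwv hne hnadj], by simp⟩,
    by simp⟩

variable (G) [Fintype V] [DecidableRel G.Adj]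

def shortPathEdgeSets : Finset (Finset (Sym2 V)) :=
  ((univ : Finset (V × V)).filter fun x => G.Adj x.1 x.2).image (fun x => {s(x.1, x.2)}) ∪
    ((univ : Finset (V × V × V)).filter fun x =>
        G.Adj x.1 x.2.1 ∧ G.Adj x.2.1 x.2.2 ∧ x.1 ≠ x.2.2 ∧ ¬G.Adj x.1 x.2.2).image
      fun x => {s(x.1, x.2.1), s(x.2.1, x.2.2)}

variable {G}

lemma mem_shortPathEdgeSets {T : Finset (Sym2 V)} :
    T ∈ G.shortPathEdgeSets ↔ (∃ u v, G.Adj u v ∧ {s(u, v)} = T) ∨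
      ∃ u w v, G.Adj u w ∧ G.Adj w v ∧ u ≠ v ∧ ¬G.Adj u v ∧ {s(u, w), s(w, v)} = T := by
  simp [shortPathEdgeSets, and_assoc]

lemma geodesicPathSets_eq_shortPathEdgeSets (h : G.ediam ≤ 2) :
    G.geodesicPathSets = G.shortPathEdgeSets := by
  ext T
  rw [mem_coe, mem_shortPathEdgeSets]
  constructor
  · rintro ⟨u, v, p, hp, rfl⟩
    have hlen := hp.length_le_of_ediam_le h
    match p, hp, hlen with
    | .nil, hp, _ => exact absurd hp.2.2 (by simp)
    | .cons huv .nil, _, _ => exact .inl ⟨u, v, huv, by simp⟩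
    | .cons huw (.cons hwv .nil), hp, _ =>
      have hdist : G.dist u v = 2 := by simpa using hp.2.1.symm
      refine .inr ⟨u, _, v, huw, hwv, ?_, ?_, by simp⟩
      · rintro rfl
        simp at hdist
      · intro huv
        simp [dist_eq_one_iff_adj.mpr huv] at hdist
    | .cons _ (.cons _ (.cons _ _)), _, hlen => simp at hlen
  · rintro (⟨u, v, huv, rfl⟩ | ⟨u, w, v, huw, hwv, hne, hnadj, rfl⟩)
    · exact singleton_mem_geodesicPathSets huv
    · exact pair_mem_geodesicPathSets huw hwv hne hnadj

end geodesic

lemma isGeodesicLeechLabeling_of_image_eq [DecidableEq V] {G : SimpleGraph V}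
    {S : Finset (Finset (Sym2 V))} {f : Sym2 V → ℕ} (hS : G.geodesicPathSets = S)
    (hpos : ∀ e ∈ G.edgeSet, 1 ≤ f e)
    (himage : S.image (fun T => ∑ e ∈ T, f e) = Icc 1 #S) :
    G.IsGeodesicLeechLabeling f := by
  have htgp : G.tgp = #S := by rw [tgp, hS, Set.ncard_coe_finset]
  have hinj : Set.InjOn (fun T => ∑ e ∈ T, f e) S :=
    injOn_of_card_image_eq (by rw [himage, Nat.card_Icc, Nat.add_sub_cancel])
  refine ⟨hpos, ?_⟩
  rw [hS, htgp, ← coe_Icc, ← himage, coe_image]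
  exact ⟨Set.mapsTo_image _ _, hinj, Set.surjOn_image _ _⟩

end SimpleGraph

/-- The rungs `(a, 0) — (a, 1)` get `1, 2, 3`, the edges of the bottom triangle `4, 7, 9`
and those of the top triangle `13, 16, 18`; a two-edge geodesic is a triangle edge plus a
rung at one of its ends, which fills in `5, 6, 8, 10, 11, 12` and `14, 15, 17, 19, 20, 21`.
(`![9, 4, 7] (a + b)` reads the triangle edge `{a, b}` off its sum in `Fin 3`.) -/
def prismLabel : Sym2 (Fin 3 × Fin 2) → ℕ :=
  Sym2.lift ⟨fun x y =>
    if x.1 = y.1 then x.1 + 1 else ![9, 4, 7] (x.1 + y.1) + 9 * (x.2 ⊔ y.2 : Fin 2), by decide⟩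

/-- The triangular prism graph, i.e. the Cartesian (box) product of the complete graph on
`3` vertices with the complete graph on `2` vertices, admits a geodesic Leech labeling;
in particular it is a geodesic Leech graph. -/
theorem statement_17 :
    ∃ f : Sym2 (Fin 3 × Fin 2) → ℕ,
      ((⊤ : SimpleGraph (Fin 3)) □ (⊤ : SimpleGraph (Fin 2))).IsGeodesicLeechLabeling f := by
  refine ⟨prismLabel,
    isGeodesicLeechLabeling_of_image_eq
      (geodesicPathSets_eq_shortPathEdgeSets (ediam_boxProd_top_le_two _ _)) ?_ (by decide)⟩
  rintro ⟨x, y⟩ hxy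
  revert x y
  decide
end
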